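/- arXiv:2204.12871 — 2 statements merged into one kernel-verified Lean document; each statement's English description precedes it below -/
import Mathlib

section
/- Let T₁,…,T_{n−1} be infinite sets of dyadic numbers, Γ ⊂ ℤ an infinite set, 1 ≤ p ≤ n−1, and 1 ≤ j₁ < ⋯ < j_p ≤ n−1. Let B be the basis of all n-dimensional intervals R₁×⋯×Rₙ such that |R₁| ∈ T₁,…,|R_{n−1}| ∈ T_{n−1} and |Rₙ| = 2^γ·|R_{j₁}|⋯|R_{j_p}| for some γ ∈ Γ. Then there is a constant cₙ > 0 depending only on n such that for every α ∈ (0,1) there exists a bounded measurable set E ⊂ ℝⁿ of positive Lebesgue measure with |{x ∈ ℝⁿ : M_B(χ_E)(x) > α}| ≥ cₙ · (1/α) · (1 + log(1/α))^{n−1} · |E|. -/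
open MeasureTheory Set
open scoped ENNReal

noncomputable section

/-- An axis-parallel interval (box) in `ℝⁿ`, given by its left and right endpoints. -/
structure BoxInterval (n : ℕ) where
  a : Fin n → ℝ
  b : Fin n → ℝ
  hab : ∀ j, a j < b j

namespace BoxInterval

/-- The underlying set of a box. -/
def toSet {n : ℕ} (R : BoxInterval n) : Set (Fin n → ℝ) :=
  Set.univ.pi fun j => Set.Icc (R.a j) (R.b j)

/-- The side length of a box in direction `j`. -/
def side {n : ℕ} (R : BoxInterval n) (j : Fin n) : ℝ := R.b j - R.a j

/-- Translation of a box by a vector `v`. -/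
def translate {n : ℕ} (R : BoxInterval n) (v : Fin n → ℝ) : BoxInterval n where
  a := fun j => R.a j + v j
  b := fun j => R.b j + v j
  hab := fun j => by have := R.hab j; linarith

end BoxInterval

/-- A rare basis in `ℝⁿ`: a nonempty translation-invariant collection of intervals. -/
def IsRareBasis {n : ℕ} (B : Set (BoxInterval n)) : Prop :=
  B.Nonempty ∧ ∀ R ∈ B, ∀ v : Fin n → ℝ, R.translate v ∈ B

/-- The geometric maximal operator `M_B` associated with a collection `B` of boxes:
`M_B f (x) = sup { (1/|R|) ∫_R |f| : x ∈ R ∈ B }`. -/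
def maxOp {n : ℕ} (B : Set (BoxInterval n)) (f : (Fin n → ℝ) → ℝ)
    (x : Fin n → ℝ) : ℝ≥0∞ :=
  ⨆ (R : BoxInterval n) (_ : R ∈ B) (_ : x ∈ R.toSet),
    (∫⁻ y in R.toSet, ENNReal.ofReal |f y| ∂volume) / volume R.toSet

/-- The spectrum `W_B ⊂ ℤⁿ` of a collection of boxes: all tuples
`(⌈log₂ |R₁|⌉, …, ⌈log₂ |Rₙ|⌉)` over boxes `R₁ × ⋯ × Rₙ ∈ B`. -/
def spectrumB {n : ℕ} (B : Set (BoxInterval n)) : Set (Fin n → ℤ) :=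
  {w | ∃ R ∈ B, ∀ j, w j = ⌈Real.logb 2 (R.side j)⌉}

/-- The slice `W_t` of `W ⊂ ℤ^{k+1}` over `t ∈ ℤᵏ`. -/
def sliceZ {k : ℕ} (W : Set (Fin (k + 1) → ℤ)) (t : Fin k → ℤ) : Set ℤ :=
  {τ | Fin.snoc t τ ∈ W}

/-- `W` is a net for `S` in `ℤ^{k+1}`: every slice of `W` is a one-dimensional
net for the corresponding slice of `S`. -/
def IsNetMulti {k : ℕ} (W S : Set (Fin (k + 1) → ℤ)) : Prop :=
  ∀ t : Fin k → ℤ, ∃ N : ℕ, ∀ τ ∈ sliceZ S t, ∃ w ∈ sliceZ W t, |τ - w| ≤ (N : ℤ)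

/-- Projection of `W ⊂ ℤⁿ` onto the first `k` coordinates. -/
def projZ {n : ℕ} (k : ℕ) (hk : k ≤ n) (W : Set (Fin n → ℤ)) : Set (Fin k → ℤ) :=
  (fun w (i : Fin k) => w (Fin.castLE hk i)) '' W

/-- `W ⊂ ℤⁿ` is dense in `S₁ × ⋯ × Sₙ`: for each `k`, `π_{k+1}(W)` is a net for
`π_k(W) × S_{k+1}`. -/
def IsDenseIn {n : ℕ} (W : Set (Fin n → ℤ)) (S : Fin n → Set ℤ) : Prop :=
  ∀ k : Fin n,
    IsNetMulti (projZ (k.val + 1) k.isLt W)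
      {v : Fin (k.val + 1) → ℤ |
        Fin.init v ∈ projZ k.val (Nat.le_of_lt k.isLt) W ∧ v (Fin.last k.val) ∈ S k}

/-- `Ω_{n,k}`: the set of `n`-tuples of positive integers summing to `k`. -/
def OmegaNK (n k : ℕ) : Set (Fin n → ℕ) :=
  {m | (∀ j, 1 ≤ m j) ∧ ∑ j, m j = k}

/-- The smallest box concentric with `R`, containing `R`, with dyadic side lengths. -/
def dyadicHull {n : ℕ} (R : BoxInterval n) : BoxInterval n where
  a := fun j => (R.a j + R.b j) / 2 - (2:ℝ) ^ ⌈Real.logb 2 (R.side j)⌉ / 2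
  b := fun j => (R.a j + R.b j) / 2 + (2:ℝ) ^ ⌈Real.logb 2 (R.side j)⌉ / 2
  hab := fun j => by
    have h : (0:ℝ) < (2:ℝ) ^ ⌈Real.logb 2 (R.side j)⌉ := by positivity
    linarith

/-- The dyadic skeleton `B_d` of a collection `B`. -/
def dyadicSkeleton {n : ℕ} (B : Set (BoxInterval n)) : Set (BoxInterval n) :=
  {Rd | ∃ R ∈ B, Rd = dyadicHull R}

/-- `B` is `Ω`-complete (for `Ω ⊆ Ω_{n,k}`). -/
def OmegaComplete {n : ℕ} (B : Set (BoxInterval n)) (k : ℕ) (Ω : Set (Fin n → ℕ)) : Prop :=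
  ∃ s : Fin n → ℕ → ℤ,
    (∀ j, ∀ m, m < k → s j m < s j (m + 1)) ∧
    ∀ m ∈ Ω, ∃ R ∈ dyadicSkeleton B, ∀ j,
      R.side j ∈ Set.Ioc ((2:ℝ) ^ s j (m j - 1)) ((2:ℝ) ^ s j (m j))

/-- Product of an `n`-dimensional box and a one-dimensional box. -/
def prodBox {n : ℕ} (J1 : BoxInterval n) (J2 : BoxInterval 1) : BoxInterval (n + 1) where
  a := Fin.snoc J1.a (J2.a 0)
  b := Fin.snoc J1.b (J2.b 0)
  hab := fun j => by
    induction j using Fin.lastCases with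
    | last => simpa using J2.hab 0
    | cast i => simpa using J1.hab i

/-- The product basis `B₁ × B₂`. -/
def prodBasis {n : ℕ} (B1 : Set (BoxInterval n)) (B2 : Set (BoxInterval 1)) :
    Set (BoxInterval (n + 1)) :=
  {R | ∃ J1 ∈ B1, ∃ J2 ∈ B2, R = prodBox J1 J2}

/-- The (is)-property of a rare basis in `ℝ²`. -/
def ISProperty (B : Set (BoxInterval 2)) : Prop :=
  ∀ k : ℕ, ∃ R : Fin (k + 1) → BoxInterval 2,
    (∀ i, R i ∈ B) ∧
    (∀ i, (R i).a = fun _ => 0) ∧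
    (∀ i, ∃ pq : Fin 2 → ℤ, ∀ l, (R i).b l = (2:ℝ) ^ pq l) ∧
    (∀ i j, i ≠ j → ∀ v : Fin 2 → ℝ, ¬ ((R i).translate v).toSet ⊆ (R j).toSet) ∧
    (∀ i j, ∃ Q ∈ B, Q.toSet = (R i).toSet ∩ (R j).toSet)

/-!
Fix `K` with `2 ^ (-K) > α`. In each direction `j` pick a ladder of exponents
`σ j 0 < ⋯ < σ j K` and let `E = ∏ⱼ Eⱼ`, where `Eⱼ ⊆ [0, 2 ^ σ j K)` consists of the points whose
binary digits of weights `2 ^ σ j l`, `l < K`, vanish. For a composition `r` of `K` into positive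
parts, a point at which only the digits with `l ≥ r j` vanish lies in the dyadic box of sides
`2 ^ e j`, `σ j (r j - 1) < e j ≤ σ j (r j)`, and `E` fills exactly the fraction `2 ^ (-K)` of that
box. When these boxes belong to the basis, the corresponding shells, pairwise disjoint and each of
measure `2 ^ (K - n - 1) |E|`, lie in `{M_B χ_E > α}`; there are `≳ (K / n) ^ n` compositions,
whence `|{M_B χ_E > α}| ≳ α⁻¹ log (1 / α) ^ n |E|`. The basis contains the boxes once the ladders
of the first `n` directions are taken in the exponent sets of the `Tᵢ` and the last one in `Γ`,
shifted, with gaps exceeding the spread of the exponent of `∏ᵢ |R_{jj i}|`. For `α` close to `1`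
a single box of the basis does the job.
-/

namespace BoxInterval

variable {d : ℕ} (R : BoxInterval d)

lemma measurableSet_toSet : MeasurableSet R.toSet := .univ_pi fun _ => measurableSet_Icc

lemma isBounded_toSet : Bornology.IsBounded R.toSet := by
  rw [toSet, pi_univ_Icc]
  exact Metric.isBounded_Icc _ _

lemma volume_toSet : volume R.toSet = ∏ j, ENNReal.ofReal (R.side j) := by
  simp only [toSet, volume_pi_pi, Real.volume_Icc, side]

lemma volume_toSet_pos : 0 < volume R.toSet := by
  rw [volume_toSet, pos_iff_ne_zero, Finset.prod_ne_zero_iff]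
  exact fun j _ => (ENNReal.ofReal_pos.mpr (sub_pos.mpr (R.hab j))).ne'

lemma volume_toSet_ne_top : volume R.toSet ≠ ⊤ := by
  rw [volume_toSet]
  exact ENNReal.prod_ne_top fun _ _ => ENNReal.ofReal_ne_top

end BoxInterval

lemma setLIntegral_ofReal_abs_indicator_one {α : Type*} [MeasurableSpace α] (μ : Measure α)
    {E : Set α} (hE : MeasurableSet E) (s : Set α) :
    ∫⁻ y in s, ENNReal.ofReal |E.indicator (fun _ => (1 : ℝ)) y| ∂μ = μ (E ∩ s) := by
  have h : (fun y => ENNReal.ofReal |E.indicator (fun _ => (1 : ℝ)) y|) = E.indicator 1 := by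
    ext y
    by_cases hy : y ∈ E <;> simp [hy]
  rw [h, lintegral_indicator_one hE, Measure.restrict_apply hE]

section MaxOp

variable {d : ℕ} {B : Set (BoxInterval d)} {R : BoxInterval d}

lemma volume_inter_div_le_maxOp (hR : R ∈ B) {x : Fin d → ℝ} (hx : x ∈ R.toSet)
    {E : Set (Fin d → ℝ)} (hE : MeasurableSet E) :
    volume (E ∩ R.toSet) / volume R.toSet ≤ maxOp B (E.indicator fun _ => 1) x := by
  rw [← setLIntegral_ofReal_abs_indicator_one volume hE]
  exact le_iSup₂_of_le R hR (le_iSup_of_le hx le_rfl)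

lemma toSet_subset_superlevel_of_mem (hR : R ∈ B) {t : ℝ≥0∞} (ht : t < 1) :
    R.toSet ⊆ {x | t < maxOp B (R.toSet.indicator fun _ => 1) x} := fun x hx => by
  have h := volume_inter_div_le_maxOp hR hx R.measurableSet_toSet
  rw [inter_self, ENNReal.div_self R.volume_toSet_pos.ne' R.volume_toSet_ne_top] at h
  exact ht.trans_le h

end MaxOp

namespace RareBasis

open AddSubgroup (zmultiples zmultiples_le_of_mem intCast_mul_mem_zmultiples)

lemma ofReal_two_zpow (m : ℤ) : ENNReal.ofReal ((2 : ℝ) ^ m) = 2 ^ m := by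
  rw [← NNReal.coe_two, ← NNReal.coe_zpow, ENNReal.ofReal_coe_nnreal,
    ENNReal.coe_zpow two_ne_zero, ENNReal.coe_two]

lemma prod_two_zpow {ι : Type*} (s : Finset ι) (f : ι → ℤ) :
    ∏ i ∈ s, (2 : ℝ≥0∞) ^ f i = 2 ^ ∑ i ∈ s, f i := by
  induction s using Finset.cons_induction with
  | empty => simp
  | cons a s ha ih =>
    rw [Finset.prod_cons, Finset.sum_cons, ENNReal.zpow_add two_ne_zero ENNReal.ofNat_ne_top, ih]

lemma prod_two_zpow_real {ι : Type*} (s : Finset ι) (f : ι → ℤ) :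
    ∏ i ∈ s, (2 : ℝ) ^ f i = 2 ^ ∑ i ∈ s, f i := by
  induction s using Finset.cons_induction with
  | empty => simp
  | cons a s ha ih => rw [Finset.prod_cons, Finset.sum_cons, zpow_add₀ two_ne_zero, ih]

lemma two_zpow_mem_zmultiples {s m : ℤ} (h : s ≤ m) : (2 : ℝ) ^ m ∈ zmultiples ((2 : ℝ) ^ s) := by
  refine ⟨2 ^ (m - s).toNat, ?_⟩
  show ((2 ^ (m - s).toNat : ℤ) • (2 : ℝ) ^ s) = 2 ^ m
  rw [zsmul_eq_mul, Int.cast_pow, Int.cast_two, ← zpow_natCast, Int.toNat_of_nonneg (by omega),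
    ← zpow_add₀ two_ne_zero, sub_add_cancel]

lemma zmultiples_two_zpow_le_of_le {s m : ℤ} (h : s ≤ m) :
    zmultiples ((2 : ℝ) ^ m) ≤ zmultiples ((2 : ℝ) ^ s) :=
  zmultiples_le_of_mem (two_zpow_mem_zmultiples h)

/-- The reals whose binary digit of weight `2 ^ s` vanishes. -/
def zeroDigitSet (s : ℤ) : Set ℝ :=
  ⋃ q : ℤ, Ico (q * 2 ^ (s + 1)) (q * 2 ^ (s + 1) + 2 ^ s)

lemma measurableSet_zeroDigitSet (s : ℤ) : MeasurableSet (zeroDigitSet s) :=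
  .iUnion fun _ => measurableSet_Ico

lemma Ico_inter_zeroDigitSet {s m : ℤ} (hs : s < m) {a : ℝ}
    (ha : a ∈ zmultiples ((2 : ℝ) ^ (s + 1))) :
    Ico a (a + 2 ^ m) ∩ zeroDigitSet s = ⋃ k ∈ Finset.range (2 ^ (m - s - 1).toNat),
      Ico (a + k * 2 ^ (s + 1)) (a + k * 2 ^ (s + 1) + 2 ^ s) := by
  obtain ⟨t, rfl⟩ := ha
  have hc : (0 : ℝ) < 2 ^ s := by positivity
  have hc2 : (2 : ℝ) ^ (s + 1) = 2 * 2 ^ s := by rw [zpow_add_one₀ two_ne_zero]; ring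
  have hM : ((2 ^ (m - s - 1).toNat : ℕ) : ℝ) * 2 ^ (s + 1) = 2 ^ m := by
    rw [Nat.cast_pow, Nat.cast_two, ← zpow_natCast, Int.toNat_of_nonneg (by omega),
      ← zpow_add₀ two_ne_zero]
    congr 1; ring
  rw [← hM]
  ext x
  simp only [mem_inter_iff, mem_Ico, zeroDigitSet, mem_iUnion, Finset.mem_range, zsmul_eq_mul,
    exists_prop, hc2]
  constructor
  · rintro ⟨⟨hx1, hx2⟩, q, hq1, hq2⟩
    have htq : (t : ℝ) < q + 1 := by nlinarith
    have hqM : (q : ℝ) < t + (2 ^ (m - s - 1).toNat : ℕ) := by nlinarith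
    have htq' : t ≤ q := Int.lt_add_one_iff.mp (by exact_mod_cast htq)
    have hqM' : q - t < (2 ^ (m - s - 1).toNat : ℕ) := by
      rw [sub_lt_iff_lt_add']; exact_mod_cast hqM
    have hk : (((q - t).toNat : ℕ) : ℝ) = q - t := by
      rw [← Int.cast_natCast, Int.toNat_of_nonneg (by omega), Int.cast_sub]
    refine ⟨(q - t).toNat, by omega, ?_⟩
    rw [hk]
    constructor <;> linarith
  · rintro ⟨k, hk, h1, h2⟩
    have hk' : (k : ℝ) + 1 ≤ (2 ^ (m - s - 1).toNat : ℕ) := by exact_mod_cast hk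
    refine ⟨⟨by nlinarith, by nlinarith⟩, t + k, by push_cast; linarith, by push_cast; linarith⟩

lemma volume_Ico_inter_zeroDigitSets (S : Finset ℤ) {m : ℤ} {a : ℝ} (hm : ∀ s ∈ S, s < m)
    (ha : ∀ s ∈ S, a ∈ zmultiples ((2 : ℝ) ^ (s + 1))) :
    volume (Ico a (a + 2 ^ m) ∩ ⋂ s ∈ S, zeroDigitSet s) = 2 ^ (m - S.card) := by
  induction S using Finset.induction_on_max generalizing m a with
  | empty => simp [Real.volume_Ico, ofReal_two_zpow]
  | insert s₀ S hlt ih =>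
    have hs₀ : s₀ < m := hm s₀ (Finset.mem_insert_self _ _)
    have hpiece : ∀ k : ℕ, volume (Ico (a + k * 2 ^ (s₀ + 1)) (a + k * 2 ^ (s₀ + 1) + 2 ^ s₀) ∩
        ⋂ s ∈ S, zeroDigitSet s) = 2 ^ (s₀ - S.card) := fun k =>
      ih (fun s hs => hlt s hs) fun s hs => add_mem (ha s (Finset.mem_insert_of_mem hs))
        (zmultiples_two_zpow_le_of_le (show s + 1 ≤ s₀ + 1 by linarith [hlt s hs])
          (by simpa using intCast_mul_mem_zmultiples ((2 : ℝ) ^ (s₀ + 1)) (k : ℤ)))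
    have hdisj : (Finset.range (2 ^ (m - s₀ - 1).toNat) : Set ℕ).PairwiseDisjoint fun k : ℕ =>
        Ico (a + k * 2 ^ (s₀ + 1)) (a + k * 2 ^ (s₀ + 1) + 2 ^ s₀) ∩ ⋂ s ∈ S, zeroDigitSet s := by
      intro k _ k' _ hkk'
      have hc : (2 : ℝ) ^ (s₀ + 1) = 2 ^ s₀ + 2 ^ s₀ := by rw [zpow_add_one₀ two_ne_zero]; ring
      refine (pairwise_disjoint_Ico_add_zsmul a ((2 : ℝ) ^ (s₀ + 1))
        (Nat.cast_injective.ne hkk' : (k : ℤ) ≠ k')).mono ?_ ?_ <;>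
      · intro x hx
        simp only [mem_inter_iff, mem_Ico, zsmul_eq_mul, Int.cast_add, Int.cast_natCast,
          Int.cast_one] at hx ⊢
        constructor <;> nlinarith [hx.1.1, hx.1.2]
    rw [Finset.set_biInter_insert, ← inter_assoc,
      Ico_inter_zeroDigitSet hs₀ (ha s₀ (Finset.mem_insert_self _ _)), iUnion₂_inter,
      measure_biUnion_finset hdisj fun k _ => measurableSet_Ico.inter
        (.biInter (Set.to_countable _) fun s _ => measurableSet_zeroDigitSet s),
      Finset.sum_congr rfl fun k _ => hpiece k, Finset.sum_const, Finset.card_range, nsmul_eq_mul,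
      Finset.card_insert_of_notMem fun h => lt_irrefl _ (hlt s₀ h), Nat.cast_pow, Nat.cast_two,
      ← zpow_natCast, Int.toNat_of_nonneg (by omega),
      ← ENNReal.zpow_add two_ne_zero ENNReal.ofNat_ne_top]
    congr 1
    push_cast
    ring

def dyadicFloor (m : ℤ) (x : ℝ) : ℝ := ⌊x / 2 ^ m⌋ * 2 ^ m

lemma dyadicFloor_le (m : ℤ) (x : ℝ) : dyadicFloor m x ≤ x := by
  rw [dyadicFloor, ← le_div_iff₀ (by positivity)]
  exact Int.floor_le _

lemma lt_dyadicFloor_add (m : ℤ) (x : ℝ) : x < dyadicFloor m x + 2 ^ m := by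
  have := Int.lt_floor_add_one (x / 2 ^ m)
  rw [div_lt_iff₀ (by positivity)] at this
  rw [dyadicFloor]
  linarith

lemma dyadicFloor_mem_zmultiples (m : ℤ) (x : ℝ) : dyadicFloor m x ∈ zmultiples ((2 : ℝ) ^ m) :=
  intCast_mul_mem_zmultiples _ _

lemma Ico_dyadicFloor_subset {m : ℤ} {A B x : ℝ} (hA : A ∈ zmultiples ((2 : ℝ) ^ m))
    (hB : B ∈ zmultiples ((2 : ℝ) ^ m)) (hx : x ∈ Ico A B) :
    Ico (dyadicFloor m x) (dyadicFloor m x + 2 ^ m) ⊆ Ico A B := by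
  obtain ⟨t, rfl⟩ := hA
  obtain ⟨u, rfl⟩ := hB
  have hc : (0 : ℝ) < 2 ^ m := by positivity
  simp only [zsmul_eq_mul, mem_Ico] at hx ⊢
  have ht : t ≤ ⌊x / 2 ^ m⌋ := Int.le_floor.mpr (by rw [le_div_iff₀ hc]; exact hx.1)
  have hu : ⌊x / 2 ^ m⌋ + 1 ≤ u :=
    Int.floor_lt.mpr (by rw [div_lt_iff₀ hc]; exact hx.2)
  have ht' : (t : ℝ) ≤ ⌊x / 2 ^ m⌋ := by exact_mod_cast ht
  have hu' : (⌊x / 2 ^ m⌋ : ℝ) + 1 ≤ u := by exact_mod_cast hu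
  intro y hy
  rw [dyadicFloor] at hy
  constructor <;> nlinarith [hy.1, hy.2]

section CantorLevel

variable {σ : ℕ → ℤ} {K m m' : ℕ}

def cantorLevel (σ : ℕ → ℤ) (K m : ℕ) : Set ℝ :=
  Ico 0 (2 ^ σ K) ∩ ⋂ l ∈ Finset.Ico m K, zeroDigitSet (σ l)

def cantorShell (σ : ℕ → ℤ) (K m : ℕ) : Set ℝ :=
  cantorLevel σ K m \ cantorLevel σ K (m - 1)

lemma measurableSet_cantorLevel (σ : ℕ → ℤ) (K m : ℕ) : MeasurableSet (cantorLevel σ K m) :=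
  measurableSet_Ico.inter (.biInter (Set.to_countable _) fun _ _ => measurableSet_zeroDigitSet _)

lemma measurableSet_cantorShell (σ : ℕ → ℤ) (K m : ℕ) : MeasurableSet (cantorShell σ K m) :=
  (measurableSet_cantorLevel σ K m).diff (measurableSet_cantorLevel σ K (m - 1))

lemma cantorLevel_mono (h : m ≤ m') : cantorLevel σ K m ⊆ cantorLevel σ K m' :=
  inter_subset_inter_right _ <| biInter_subset_biInter_left fun l hl => by
    simp only [Finset.coe_Ico, mem_Ico] at hl ⊢; omega

lemma disjoint_cantorShell (h : m ≠ m') : Disjoint (cantorShell σ K m) (cantorShell σ K m') := by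
  wlog hlt : m < m' generalizing m m'
  · exact (this h.symm (by omega)).symm
  exact disjoint_left.mpr fun x hx hx' =>
    hx'.2 (cantorLevel_mono (show m ≤ m' - 1 by omega) hx.1)

variable (hσ : StrictMonoOn σ (Iic K))
include hσ

lemma volume_Ico_inter_zeroDigitSets_comp {L : Finset ℕ} (hL : ∀ l ∈ L, l ≤ K) {e : ℤ} {a : ℝ}
    (he : ∀ l ∈ L, σ l < e) (ha : ∀ l ∈ L, a ∈ zmultiples ((2 : ℝ) ^ (σ l + 1))) :
    volume (Ico a (a + 2 ^ e) ∩ ⋂ l ∈ L, zeroDigitSet (σ l)) = 2 ^ (e - L.card) := by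
  rw [← Finset.set_biInter_finset_image,
    volume_Ico_inter_zeroDigitSets _ (by simpa using he) (by simpa using ha),
    Finset.card_image_of_injOn (hσ.injOn.mono fun l hl => hL l hl)]

lemma volume_cantorLevel (m : ℕ) :
    volume (cantorLevel σ K m) = 2 ^ (σ K - (K - m : ℕ)) := by
  rw [cantorLevel, ← zero_add ((2 : ℝ) ^ σ K), volume_Ico_inter_zeroDigitSets_comp hσ
    (fun l hl => (Finset.mem_Ico.mp hl).2.le)
    (fun l hl => hσ (mem_Iic.mpr (Finset.mem_Ico.mp hl).2.le)
      (mem_Iic.mpr le_rfl) (Finset.mem_Ico.mp hl).2) (fun _ _ => zero_mem _), Nat.card_Ico]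

lemma volume_cantorLevel_ne_top (m : ℕ) : volume (cantorLevel σ K m) ≠ ⊤ := by
  rw [volume_cantorLevel hσ]
  exact ENNReal.zpow_ne_top two_ne_zero ENNReal.ofNat_ne_top _

lemma volume_cantorLevel_eq_mul (hm : m ≤ K) :
    volume (cantorLevel σ K m) = 2 ^ (m : ℤ) * volume (cantorLevel σ K 0) := by
  rw [volume_cantorLevel hσ, volume_cantorLevel hσ,
    ← ENNReal.zpow_add two_ne_zero ENNReal.ofNat_ne_top]
  congr 1
  omega

lemma volume_cantorShell (hm : 1 ≤ m) (hmK : m ≤ K) :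
    volume (cantorShell σ K m) = 2 ^ ((m : ℤ) - 1) * volume (cantorLevel σ K 0) := by
  obtain ⟨m, rfl⟩ := Nat.exists_eq_add_of_le' hm
  have hX := volume_cantorLevel_eq_mul hσ (show m ≤ K by omega)
  rw [cantorShell, Nat.add_sub_cancel, measure_sdiff (cantorLevel_mono (Nat.le_succ m))
      (measurableSet_cantorLevel σ K m).nullMeasurableSet (volume_cantorLevel_ne_top hσ m),
    volume_cantorLevel_eq_mul hσ hmK, Nat.cast_add_one, add_sub_cancel_right,
    ENNReal.zpow_add two_ne_zero ENNReal.ofNat_ne_top, zpow_one, mul_right_comm, ← hX, mul_two,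
    ENNReal.add_sub_cancel_right (volume_cantorLevel_ne_top hσ m)]

/-- Inside the dyadic interval, the digit conditions of weights `2 ^ σ l ≥ 2 ^ e` hold
identically (they hold at `x`), so only the `m` conditions below `e` cut it down. -/
lemma volume_cantorLevel_inter_Ico_dyadicFloor (hm : 1 ≤ m) (hmK : m ≤ K) {e : ℤ}
    (he : σ (m - 1) < e ∧ e ≤ σ m) {x : ℝ} (hx : x ∈ cantorLevel σ K m) :
    volume (cantorLevel σ K 0 ∩ Ico (dyadicFloor e x) (dyadicFloor e x + 2 ^ e)) = 2 ^ (e - m) := by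
  set I := Ico (dyadicFloor e x) (dyadicFloor e x + 2 ^ e)
  have hle : ∀ l, m ≤ l → l ≤ K → e ≤ σ l := fun l hl hlK =>
    he.2.trans (hσ.monotoneOn (mem_Iic.mpr hmK) (mem_Iic.mpr hlK) hl)
  obtain ⟨hx0, hxZ⟩ := hx
  have hI0 : I ⊆ Ico 0 (2 ^ σ K) :=
    Ico_dyadicFloor_subset (zero_mem _) (two_zpow_mem_zmultiples (hle K hmK le_rfl)) hx0
  have hIZ : ∀ l ∈ Finset.Ico m K, I ⊆ zeroDigitSet (σ l) := by
    intro l hl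
    obtain ⟨q, hq⟩ := mem_iUnion.mp (mem_iInter₂.mp hxZ l hl)
    have hel := hle l (Finset.mem_Ico.mp hl).1 (Finset.mem_Ico.mp hl).2.le
    have hq2 : (q : ℝ) * 2 ^ (σ l + 1) ∈ zmultiples ((2 : ℝ) ^ e) :=
      zmultiples_two_zpow_le_of_le (by omega) (intCast_mul_mem_zmultiples _ q)
    exact (Ico_dyadicFloor_subset hq2 (add_mem hq2 (two_zpow_mem_zmultiples hel)) hq).trans
      (subset_iUnion_of_subset q subset_rfl)
  have hset : cantorLevel σ K 0 ∩ I = I ∩ ⋂ l ∈ Finset.range m, zeroDigitSet (σ l) := by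
    ext y
    simp only [cantorLevel, mem_inter_iff, mem_iInter, Finset.mem_Ico, Finset.mem_range]
    constructor
    · rintro ⟨⟨-, hy⟩, hyI⟩
      exact ⟨hyI, fun l hl => hy l ⟨Nat.zero_le l, by omega⟩⟩
    · rintro ⟨hyI, hy⟩
      refine ⟨⟨hI0 hyI, fun l hl => ?_⟩, hyI⟩
      rcases lt_or_ge l m with hlm | hlm
      · exact hy l hlm
      · exact hIZ l (Finset.mem_Ico.mpr ⟨hlm, hl.2⟩) hyI
  have hlow : ∀ l ∈ Finset.range m, σ l < e := fun l hl => by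
    have hl' := Finset.mem_range.mp hl
    exact (hσ.monotoneOn (mem_Iic.mpr (by omega)) (mem_Iic.mpr (by omega))
      (show l ≤ m - 1 by omega)).trans_lt he.1
  rw [hset, volume_Ico_inter_zeroDigitSets_comp hσ
    (fun l hl => (Finset.mem_range.mp hl).le.trans hmK) hlow
    (fun l hl => zmultiples_two_zpow_le_of_le (by linarith [hlow l hl])
      (dyadicFloor_mem_zmultiples e x)),
    Finset.card_range]

end CantorLevel

def dyadicCell {d : ℕ} (e : Fin d → ℤ) (x : Fin d → ℝ) : BoxInterval d where
  a j := dyadicFloor (e j) (x j)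
  b j := dyadicFloor (e j) (x j) + 2 ^ e j
  hab _ := lt_add_of_pos_right _ (by positivity)

section CantorBox

variable {d K : ℕ} {σ : Fin d → ℕ → ℤ} {r r' : Fin d → ℕ}

lemma side_dyadicCell (e : Fin d → ℤ) (x : Fin d → ℝ) (j : Fin d) :
    (dyadicCell e x).side j = 2 ^ e j :=
  add_sub_cancel_left _ _

lemma mem_dyadicCell (e : Fin d → ℤ) (x : Fin d → ℝ) : x ∈ (dyadicCell e x).toSet :=
  fun _ _ => ⟨dyadicFloor_le _ _, (lt_dyadicFloor_add _ _).le⟩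

lemma volume_dyadicCell (e : Fin d → ℤ) (x : Fin d → ℝ) :
    volume (dyadicCell e x).toSet = 2 ^ ∑ j, e j := by
  simp only [BoxInterval.volume_toSet, side_dyadicCell, ofReal_two_zpow, prod_two_zpow]

lemma le_of_mem_omegaNK (hr : r ∈ OmegaNK d K) (j : Fin d) : r j ≤ K :=
  hr.2 ▸ Finset.single_le_sum (fun _ _ => Nat.zero_le _) (Finset.mem_univ j)

def cantorBox (σ : Fin d → ℕ → ℤ) (K : ℕ) (r : Fin d → ℕ) : Set (Fin d → ℝ) :=
  univ.pi fun j => cantorLevel (σ j) K (r j)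

def cantorShellBox (σ : Fin d → ℕ → ℤ) (K : ℕ) (r : Fin d → ℕ) : Set (Fin d → ℝ) :=
  univ.pi fun j => cantorShell (σ j) K (r j)

lemma measurableSet_cantorBox (σ : Fin d → ℕ → ℤ) (K : ℕ) (r : Fin d → ℕ) :
    MeasurableSet (cantorBox σ K r) :=
  .univ_pi fun _ => measurableSet_cantorLevel _ _ _

lemma isBounded_cantorBox (σ : Fin d → ℕ → ℤ) (K : ℕ) (r : Fin d → ℕ) :
    Bornology.IsBounded (cantorBox σ K r) := by
  refine (Metric.isBounded_Icc (0 : Fin d → ℝ) fun j => 2 ^ σ j K).subset ?_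
  rw [← pi_univ_Icc]
  exact pi_mono fun j _ => inter_subset_left.trans Ico_subset_Icc_self

lemma cantorShellBox_subset (σ : Fin d → ℕ → ℤ) (K : ℕ) (r : Fin d → ℕ) :
    cantorShellBox σ K r ⊆ cantorBox σ K r :=
  pi_mono fun _ _ => sdiff_subset

lemma disjoint_cantorShellBox (h : r ≠ r') :
    Disjoint (cantorShellBox σ K r) (cantorShellBox σ K r') :=
  have ⟨j, hj⟩ := Function.ne_iff.mp h
  disjoint_univ_pi.mpr ⟨j, disjoint_cantorShell hj⟩

def HasBoxesInWindow (B : Set (BoxInterval d)) (σ : Fin d → ℕ → ℤ) (r : Fin d → ℕ) : Prop :=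
  ∃ e : Fin d → ℤ, (∀ j, σ j (r j - 1) < e j ∧ e j ≤ σ j (r j)) ∧
    ∀ R : BoxInterval d, (∀ j, R.side j = 2 ^ e j) → R ∈ B

lemma HasBoxesInWindow.nonempty {B : Set (BoxInterval d)} (h : HasBoxesInWindow B σ r) :
    B.Nonempty :=
  have ⟨e, _, he⟩ := h
  ⟨dyadicCell e 0, he _ (side_dyadicCell e 0)⟩

variable (hσ : ∀ j, StrictMonoOn (σ j) (Iic K))
include hσ

lemma volume_cantorBox_pos : 0 < volume (cantorBox σ K 0) := by
  rw [cantorBox, volume_pi_pi, pos_iff_ne_zero, Finset.prod_ne_zero_iff]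
  intro j _
  rw [Pi.zero_apply, volume_cantorLevel (hσ j)]
  exact (ENNReal.zpow_pos two_ne_zero ENNReal.ofNat_ne_top _).ne'

lemma volume_cantorShellBox (hr : r ∈ OmegaNK d K) :
    volume (cantorShellBox σ K r) = 2 ^ ((K : ℤ) - d) * volume (cantorBox σ K 0) := by
  rw [cantorShellBox, cantorBox, volume_pi_pi, volume_pi_pi,
    Finset.prod_congr rfl fun j _ => volume_cantorShell (hσ j) (hr.1 j) (le_of_mem_omegaNK hr j),
    Finset.prod_mul_distrib, prod_two_zpow]
  congr 2
  rw [Finset.sum_sub_distrib, ← Nat.cast_sum, hr.2]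
  simp

lemma cantorBox_subset_superlevel {B : Set (BoxInterval d)} (hr : r ∈ OmegaNK d K)
    (hB : HasBoxesInWindow B σ r) :
    cantorBox σ K r ⊆
      {x | 2 ^ (-(K : ℤ)) ≤ maxOp B ((cantorBox σ K 0).indicator fun _ => 1) x} := by
  obtain ⟨e, he, hBe⟩ := hB
  intro x hx
  set R := dyadicCell e x
  refine le_trans ?_ (volume_inter_div_le_maxOp (hBe R (side_dyadicCell e x)) (mem_dyadicCell e x)
    (measurableSet_cantorBox σ K 0))
  rw [ENNReal.le_div_iff_mul_le (Or.inl R.volume_toSet_pos.ne') (Or.inl R.volume_toSet_ne_top)]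
  calc 2 ^ (-(K : ℤ)) * volume R.toSet = ∏ j, (2 : ℝ≥0∞) ^ (e j - r j) := by
        rw [volume_dyadicCell, prod_two_zpow, ← ENNReal.zpow_add two_ne_zero ENNReal.ofNat_ne_top,
          Finset.sum_sub_distrib, ← Nat.cast_sum, hr.2, neg_add_eq_sub]
    _ = volume (univ.pi fun j => cantorLevel (σ j) K 0 ∩ Ico (dyadicFloor (e j) (x j))
          (dyadicFloor (e j) (x j) + 2 ^ e j)) := by
        rw [volume_pi_pi]
        exact Finset.prod_congr rfl fun j _ => (volume_cantorLevel_inter_Ico_dyadicFloor (hσ j)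
          (hr.1 j) (le_of_mem_omegaNK hr j) (he j) (hx j (mem_univ j))).symm
    _ ≤ volume (cantorBox σ K 0 ∩ R.toSet) := by
        rw [pi_inter_distrib]
        exact measure_mono (inter_subset_inter_right _ (pi_mono fun _ _ => Ico_subset_Icc_self))

theorem card_mul_volume_le_volume_superlevel {B : Set (BoxInterval d)} {P : Finset (Fin d → ℕ)}
    (hP : ∀ r ∈ P, r ∈ OmegaNK d K ∧ HasBoxesInWindow B σ r) {t : ℝ≥0∞}
    (ht : t < 2 ^ (-(K : ℤ))) :
    P.card * 2 ^ ((K : ℤ) - d) * volume (cantorBox σ K 0) ≤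
      volume {x | t < maxOp B ((cantorBox σ K 0).indicator fun _ => 1) x} :=
  calc P.card * 2 ^ ((K : ℤ) - d) * volume (cantorBox σ K 0)
      = ∑ r ∈ P, volume (cantorShellBox σ K r) := by
        rw [Finset.sum_congr rfl fun r hr => volume_cantorShellBox hσ (hP r hr).1, Finset.sum_const,
          nsmul_eq_mul, mul_assoc]
    _ = volume (⋃ r ∈ P, cantorShellBox σ K r) :=
        (measure_biUnion_finset (fun r _ r' _ h => disjoint_cantorShellBox h)
          fun r _ => .univ_pi fun j => measurableSet_cantorShell _ _ _).symm
    _ ≤ _ := measure_mono <| iUnion₂_subset fun r hr =>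
        (cantorShellBox_subset σ K r).trans <|
          (cantorBox_subset_superlevel hσ (hP r hr).1 (hP r hr).2).trans fun _ hx => ht.trans_le hx

end CantorBox

lemma exists_ladder_of_not_bddAbove {S : Set ℤ} (hS : ¬ BddAbove S) (G : ℤ) :
    ∃ σ : ℕ → ℤ, (∀ l, σ l ∈ S) ∧ ∀ l, σ l + G ≤ σ (l + 1) := by
  choose g hgS hg using not_bddAbove_iff.mp hS
  exact ⟨fun l => Nat.rec (g 0) (fun _ prev => g (prev + G)) l, fun l => by cases l <;> apply hgS,
    fun l => (hg _).le⟩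

open scoped Pointwise in
lemma exists_ladder {S : Set ℤ} (hS : S.Infinite) (K : ℕ) (G : ℤ) :
    ∃ σ : ℕ → ℤ, (∀ l ≤ K, σ l ∈ S) ∧ ∀ l < K, σ l + G ≤ σ (l + 1) := by
  by_cases hA : BddAbove S
  · obtain ⟨τ, hτS, hτ⟩ := exists_ladder_of_not_bddAbove (S := -S)
      (by rw [bddAbove_neg]; exact fun hB => hS (hB.finite_of_bddAbove hA)) G
    refine ⟨fun l => -τ (K - l), fun l _ => hτS (K - l), fun l hl => ?_⟩
    have h := hτ (K - (l + 1))
    rw [show K - (l + 1) + 1 = K - l by omega] at h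
    dsimp only
    omega
  · obtain ⟨σ, hσS, hσ⟩ := exists_ladder_of_not_bddAbove hA G
    exact ⟨σ, fun l _ => hσS l, fun l _ => hσ l⟩

lemma strictMonoOn_Iic_of_add_le {σ : ℕ → ℤ} {K : ℕ} {G : ℤ} (hG : 0 < G)
    (hσ : ∀ l < K, σ l + G ≤ σ (l + 1)) : StrictMonoOn σ (Iic K) :=
  strictMonoOn_Iic_of_lt_succ fun l hl => by
    rw [Order.succ_eq_add_one]
    linarith [hσ l hl]

lemma exists_strictMonoOn_ladder {S : Set ℤ} (hS : S.Infinite) (K : ℕ) :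
    ∃ σ : ℕ → ℤ, (∀ l ≤ K, σ l ∈ S) ∧ StrictMonoOn σ (Iic K) :=
  have ⟨σ, hσS, hσ⟩ := exists_ladder hS K 1
  ⟨σ, hσS, strictMonoOn_Iic_of_add_le one_pos hσ⟩

/-- `ρ` is a ladder in `Γ` shifted by `Dhi`, with gaps larger than `Dhi - Dlo`. -/
lemma exists_ladder_absorbing_shifts {Γ : Set ℤ} (hΓ : Γ.Infinite) (K : ℕ) (Dlo Dhi : ℤ) :
    ∃ ρ : ℕ → ℤ, StrictMonoOn ρ (Iic K) ∧ ∀ m, 1 ≤ m → m ≤ K → ∀ S, Dlo ≤ S → S ≤ Dhi →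
      ∃ γ ∈ Γ, ρ (m - 1) < γ + S ∧ γ + S ≤ ρ m := by
  obtain ⟨γ, hγΓ, hγ⟩ := exists_ladder hΓ K (|Dhi - Dlo| + 1)
  refine ⟨fun l => γ l + Dhi, strictMonoOn_Iic_of_add_le one_pos fun l hl => ?_,
    fun m hm hmK S hS₁ hS₂ => ⟨γ m, hγΓ m hmK, ?_, by linarith⟩⟩
  · linarith [hγ l hl, abs_nonneg (Dhi - Dlo)]
  · have h := hγ (m - 1) (by omega)
    rw [Nat.sub_add_cancel hm] at h
    linarith [le_abs_self (Dhi - Dlo)]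

lemma exists_ladders_hasBoxesInWindow {n p : ℕ} {T : Fin n → Set ℝ} {Γ : Set ℤ} {jj : Fin p → Fin n}
    (hT : ∀ i, (T i).Infinite ∧ T i ⊆ {x | ∃ s : ℤ, x = (2 : ℝ) ^ s}) (hΓ : Γ.Infinite)
    {B : Set (BoxInterval (n + 1))}
    (hB : ∀ R : BoxInterval (n + 1), (∀ i : Fin n, R.side i.castSucc ∈ T i) →
      (∃ γ ∈ Γ, R.side (Fin.last n) = 2 ^ γ * ∏ i : Fin p, R.side (jj i).castSucc) → R ∈ B)
    (K : ℕ) :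
    ∃ σ : Fin (n + 1) → ℕ → ℤ, (∀ j, StrictMonoOn (σ j) (Iic K)) ∧
      ∀ r ∈ OmegaNK (n + 1) K, HasBoxesInWindow B σ r := by
  have hexp : ∀ i, {s : ℤ | (2 : ℝ) ^ s ∈ T i}.Infinite := fun i =>
    (hT i).1.preimage fun x hx => let ⟨s, hs⟩ := (hT i).2 hx; ⟨s, hs.symm⟩
  choose τ hτT hτ using fun i => exists_strictMonoOn_ladder (hexp i) K
  obtain ⟨ρ, hρ, hρΓ⟩ := exists_ladder_absorbing_shifts hΓ K (∑ i, τ (jj i) 1) (∑ i, τ (jj i) K)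
  refine ⟨Fin.lastCases ρ τ, fun j => ?_, fun r hr => ?_⟩
  · induction j using Fin.lastCases with
    | last => simpa using hρ
    | cast i => simpa using hτ i
  have hrK := le_of_mem_omegaNK hr
  have hτle : ∀ i {a b : ℕ}, a ≤ b → b ≤ K → τ i a ≤ τ i b := fun i a b hab hb =>
    (hτ i).monotoneOn (mem_Iic.mpr (hab.trans hb)) (mem_Iic.mpr hb) hab
  obtain ⟨γ, hγΓ, hγ⟩ := hρΓ (r (Fin.last n)) (hr.1 _) (hrK _) (∑ i, τ (jj i) (r (jj i).castSucc))
    (Finset.sum_le_sum fun i _ => hτle _ (hr.1 _) (hrK _))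
    (Finset.sum_le_sum fun i _ => hτle _ (hrK _) le_rfl)
  refine ⟨Fin.lastCases (γ + ∑ i, τ (jj i) (r (jj i).castSucc)) fun i => τ i (r i.castSucc),
    fun j => ?_, fun R hR => hB R (fun i => ?_) ⟨γ, hγΓ, ?_⟩⟩
  · induction j using Fin.lastCases with
    | last => simpa using hγ
    | cast i =>
      simp only [Fin.lastCases_castSucc]
      exact ⟨hτ i (mem_Iic.mpr ((Nat.sub_le _ _).trans (hrK _))) (mem_Iic.mpr (hrK _))
        (Nat.sub_lt (hr.1 _) one_pos), le_rfl⟩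
  · simp only [hR i.castSucc, Fin.lastCases_castSucc]
    exact hτT i _ (hrK _)
  · simp only [hR, Fin.lastCases_last, Fin.lastCases_castSucc, prod_two_zpow_real]
    exact zpow_add₀ two_ne_zero _ _

lemma exists_finset_omegaNK {n q K : ℕ} (h : n * q < K) :
    ∃ P : Finset (Fin (n + 1) → ℕ), (∀ r ∈ P, r ∈ OmegaNK (n + 1) K) ∧ P.card = q ^ n := by
  set f : (Fin n → Fin q) → Fin (n + 1) → ℕ := fun a =>
    Fin.snoc (fun i => (a i : ℕ) + 1) (K - ∑ i, ((a i : ℕ) + 1))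
  have hsum : ∀ a : Fin n → Fin q, ∑ i, ((a i : ℕ) + 1) ≤ n * q := fun a =>
    (Finset.sum_le_sum fun i _ => (a i).isLt).trans (by simp)
  refine ⟨Finset.univ.image f, ?_, ?_⟩
  · simp only [Finset.mem_image, Finset.mem_univ, true_and, forall_exists_index,
      forall_apply_eq_imp_iff]
    intro a
    have := hsum a
    refine ⟨fun j => ?_, ?_⟩
    · induction j using Fin.lastCases with
      | last => simp only [f, Fin.snoc_last]; omega
      | cast i => simp [f]
    · rw [Fin.sum_univ_castSucc]
      simp only [f, Fin.snoc_castSucc, Fin.snoc_last]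
      omega
  · rw [Finset.card_image_of_injective _ fun a a' h => funext fun i => Fin.ext ?_, Finset.card_univ,
      Fintype.card_fun, Fintype.card_fin, Fintype.card_fin]
    simpa [f] using congrFun h i.castSucc

lemma exists_dyadic_scale {α : ℝ} (hα0 : 0 < α) (hα1 : α < 1) (n : ℕ) (c : ℝ) (hc : 0 ≤ c) :
    ∃ K : ℕ, ENNReal.ofReal α < 2 ^ (-(K : ℤ)) ∧
      ENNReal.ofReal (c * (1 / α) * (1 + Real.logb 2 (1 / α)) ^ n) ≤
        ENNReal.ofReal (c * (2 ^ (K + 1) * ((K : ℝ) + 2) ^ n)) := by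
  set L := Real.logb 2 (1 / α)
  have hα : 0 < 1 / α := by positivity
  have hL : 0 < L := Real.logb_pos one_lt_two (one_lt_one_div hα0 hα1)
  obtain ⟨K, hKL, hLK⟩ : ∃ K : ℕ, (K : ℝ) < L ∧ L ≤ K + 1 := by
    refine ⟨⌈L⌉₊ - 1, ?_, ?_⟩ <;>
      rw [Nat.cast_sub (Nat.one_le_iff_ne_zero.mpr (Nat.ceil_pos.mpr hL).ne'), Nat.cast_one]
    · linarith [Nat.ceil_lt_add_one hL.le]
    · linarith [Nat.le_ceil L]
  refine ⟨K, ?_, ?_⟩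
  · rw [Real.lt_logb_iff_rpow_lt one_lt_two hα, Real.rpow_natCast] at hKL
    rw [← ofReal_two_zpow, ENNReal.ofReal_lt_ofReal_iff (by positivity), zpow_neg, zpow_natCast,
      lt_inv_comm₀ hα0 (by positivity), ← one_div]
    exact hKL
  · have hα' : 1 / α ≤ 2 ^ (K + 1) := by
      rw [← Real.rpow_natCast, Nat.cast_add_one, ← Real.logb_le_iff_le_rpow one_lt_two hα]
      exact hLK
    rw [mul_assoc]
    exact ENNReal.ofReal_le_ofReal <| mul_le_mul_of_nonneg_left (mul_le_mul hα'
      (pow_le_pow_left₀ (by positivity) (by linarith) n) (by positivity) (by positivity)) hc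

lemma const_mul_le_one {n K : ℕ} (hK : K < 2 * n) :
    (4 * (32 * n : ℝ) ^ n)⁻¹ * (2 ^ (K + 1) * ((K : ℝ) + 2) ^ n) ≤ 1 := by
  have hK' : (K : ℝ) + 2 ≤ 3 * n := by
    have : K + 2 ≤ 3 * n := by omega
    exact_mod_cast this
  have hn : (0 : ℝ) < n := by exact_mod_cast (show 0 < n by omega)
  rw [inv_mul_le_iff₀ (by positivity), mul_one]
  calc (2 : ℝ) ^ (K + 1) * ((K : ℝ) + 2) ^ n ≤ 2 ^ (2 * n) * (3 * n) ^ n := by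
        gcongr
        · exact one_le_two
        · omega
    _ = (12 * n) ^ n := by rw [pow_mul, ← mul_pow]; ring
    _ ≤ 4 * (32 * n) ^ n := by
        have : ((12 : ℝ) * n) ^ n ≤ (32 * n) ^ n := by gcongr; norm_num
        linarith [this, pow_nonneg (show (0 : ℝ) ≤ 32 * n by positivity) n]

lemma ofReal_const_mul_le_card_mul {n K : ℕ} (hn : 1 ≤ n) (hK : 2 * n ≤ K) :
    ENNReal.ofReal ((4 * (32 * n : ℝ) ^ n)⁻¹ * (2 ^ (K + 1) * ((K : ℝ) + 2) ^ n)) ≤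
      ((K / (2 * n) : ℕ) : ℝ≥0∞) ^ n * 2 ^ ((K : ℤ) - (n + 1 : ℕ)) := by
  rw [← ENNReal.ofReal_natCast, ← ENNReal.ofReal_pow (Nat.cast_nonneg _), ← ofReal_two_zpow,
    ← ENNReal.ofReal_mul (by positivity)]
  refine ENNReal.ofReal_le_ofReal ?_
  set q := K / (2 * n)
  have hn' : (1 : ℝ) ≤ n := by exact_mod_cast hn
  have hq : (1 : ℝ) ≤ q := by exact_mod_cast (Nat.one_le_div_iff (by omega)).mpr hK
  have hKq : (K : ℝ) + 2 ≤ 8 * n * q := by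
    have h : K + 1 ≤ 2 * n * (q + 1) := Nat.lt_mul_div_succ K (by omega)
    have h' : (K : ℝ) + 1 ≤ 2 * n * (q + 1) := by exact_mod_cast h
    nlinarith
  have hpow : (2 : ℝ) ^ (K + 1) = 2 ^ ((K : ℤ) - (n + 1 : ℕ)) * (4 * 2 ^ n) := by
    rw [← zpow_natCast,
      show ((K + 1 : ℕ) : ℤ) = ((K : ℤ) - (n + 1 : ℕ)) + (n + 2 : ℕ) by push_cast; ring,
      zpow_add₀ two_ne_zero, zpow_natCast, pow_add]
    ring
  calc (4 * (32 * n : ℝ) ^ n)⁻¹ * (2 ^ (K + 1) * ((K : ℝ) + 2) ^ n)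
      ≤ (4 * (32 * n : ℝ) ^ n)⁻¹ * (2 ^ (K + 1) * (8 * n * q) ^ n) := by gcongr
    _ = ((16 * n : ℝ) ^ n / (32 * n) ^ n) * (q ^ n * 2 ^ ((K : ℤ) - (n + 1 : ℕ))) := by
        rw [hpow]
        field_simp
        rw [← mul_pow, ← mul_pow]
        ring
    _ ≤ q ^ n * 2 ^ ((K : ℤ) - (n + 1 : ℕ)) := by
        refine mul_le_of_le_one_left (by positivity) ((div_le_one (by positivity)).mpr ?_)
        gcongr
        norm_num

end RareBasis

/-- The paper's dimension `n` is `n + 1` here, so `T` has `n` components. -/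
theorem statement14_general (n : ℕ) (hn : 1 ≤ n) (T : Fin n → Set ℝ)
    (hT : ∀ i, (T i).Infinite ∧ T i ⊆ {x | ∃ s : ℤ, x = (2:ℝ) ^ s})
    (Γ : Set ℤ) (hΓ : Γ.Infinite)
    (p : ℕ) (jj : Fin p → Fin n)
    (B : Set (BoxInterval (n + 1)))
    (hBdef : B = {R | (∀ i : Fin n, R.side i.castSucc ∈ T i) ∧
      ∃ γ ∈ Γ, R.side (Fin.last n) = (2:ℝ) ^ γ * ∏ i : Fin p, R.side (jj i).castSucc}) :
    ∃ c : ℝ, 0 < c ∧ ∀ α : ℝ, 0 < α → α < 1 →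
      ∃ E : Set (Fin (n + 1) → ℝ), Bornology.IsBounded E ∧ MeasurableSet E ∧ 0 < volume E ∧
        ENNReal.ofReal (c * (1 / α) * (1 + Real.logb 2 (1 / α)) ^ n) * volume E ≤
          volume {x | ENNReal.ofReal α < maxOp B (E.indicator fun _ => (1:ℝ)) x} := by
  have hladders := RareBasis.exists_ladders_hasBoxesInWindow hT hΓ (B := B) (jj := jj)
    fun R h₁ h₂ => hBdef ▸ ⟨h₁, h₂⟩
  refine ⟨(4 * (32 * n : ℝ) ^ n)⁻¹, by positivity, fun α hα0 hα1 => ?_⟩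
  obtain ⟨K, hαK, hc⟩ := RareBasis.exists_dyadic_scale hα0 hα1 n
    (4 * (32 * n : ℝ) ^ n)⁻¹ (by positivity)
  rcases lt_or_ge K (2 * n) with hK | hK
  · obtain ⟨σ, -, hB⟩ := hladders (n + 1)
    obtain ⟨R, hR⟩ := (hB 1 ⟨fun _ => le_rfl, by simp⟩).nonempty
    refine ⟨R.toSet, R.isBounded_toSet, R.measurableSet_toSet, R.volume_toSet_pos, ?_⟩
    calc _ ≤ volume R.toSet := mul_le_of_le_one_left' <|
          hc.trans (ENNReal.ofReal_le_one.mpr (RareBasis.const_mul_le_one hK))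
      _ ≤ _ := measure_mono (toSet_subset_superlevel_of_mem hR (ENNReal.ofReal_lt_one.mpr hα1))
  · obtain ⟨σ, hσ, hB⟩ := hladders K
    obtain ⟨P, hPΩ, hPcard⟩ :=
        RareBasis.exists_finset_omegaNK (n := n) (q := K / (2 * n)) (K := K) <| by
      have h := Nat.div_mul_le_self K (2 * n)
      have : K / (2 * n) * (2 * n) = 2 * (n * (K / (2 * n))) := by ring
      omega
    refine ⟨_, RareBasis.isBounded_cantorBox σ K 0, RareBasis.measurableSet_cantorBox σ K 0,
      RareBasis.volume_cantorBox_pos hσ, ?_⟩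
    calc _ ≤ P.card * 2 ^ ((K : ℤ) - (n + 1 : ℕ)) * volume (RareBasis.cantorBox σ K 0) := by
          rw [hPcard, Nat.cast_pow]
          gcongr
          exact hc.trans (RareBasis.ofReal_const_mul_le_card_mul hn hK)
      _ ≤ _ := RareBasis.card_mul_volume_le_volume_superlevel hσ
          (fun r hr => ⟨hPΩ r hr, hB r (hPΩ r hr)⟩) hαK

/-- Application V (direct version): sharp weak type `L(1+log⁺L)^{n-1}` lower bound. Here the ambient dimension is `n + 1` (so `T₁,…,Tₙ` play the role of
`T₁,…,T_{n-1}` of the paper). -/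
theorem statement14 (n : ℕ) (hn : 1 ≤ n) (T : Fin n → Set ℝ)
    (hT : ∀ i, (T i).Infinite ∧ T i ⊆ {x | ∃ s : ℤ, x = (2:ℝ) ^ s})
    (Γ : Set ℤ) (hΓ : Γ.Infinite)
    (p : ℕ) (hp : 1 ≤ p) (hpn : p ≤ n) (jj : Fin p → Fin n) (hjj : StrictMono jj)
    (B : Set (BoxInterval (n + 1)))
    (hBdef : B = {R | (∀ i : Fin n, R.side i.castSucc ∈ T i) ∧
      ∃ γ ∈ Γ, R.side (Fin.last n) = (2:ℝ) ^ γ * ∏ i : Fin p, R.side (jj i).castSucc}) :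
    ∃ c : ℝ, 0 < c ∧ ∀ α : ℝ, 0 < α → α < 1 →
      ∃ E : Set (Fin (n + 1) → ℝ), Bornology.IsBounded E ∧ MeasurableSet E ∧ 0 < volume E ∧
        ENNReal.ofReal (c * (1 / α) * (1 + Real.logb 2 (1 / α)) ^ n) * volume E ≤
          volume {x | ENNReal.ofReal α < maxOp B (E.indicator fun _ => (1:ℝ)) x} :=
  statement14_general n hn T hT Γ hΓ p jj B hBdef
end
end

section
/- Let B₁ be a rare basis in ℝⁿ with the following property: for every k ∈ ℕ there exist increasing integer sequences (s_{1,m})_{m=0}^k,…,(s_{n,m})_{m=0}^k such that for every n-tuple of integers (m₁,…,mₙ) with k ≥ m₁ ≥ m₂ ≥ ⋯ ≥ mₙ ≥ 0 the interval [0,2^{s_{1,m₁}}]×[0,2^{s_{2,m₂}}]×⋯×[0,2^{s_{n,mₙ}}] belongs to B₁. Let B₂ be a translation-invariant collection of one-dimensional intervals whose lengths form an infinite set of dyadic numbers. Then the product basis B₁×B₂ = {J₁×J₂ : J₁ ∈ B₁, J₂ ∈ B₂} in ℝ^{n+1} is Ω_k-complete for every k ≥ n+1, where Ω_k is the set of all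 (n+1)-tuples (m₁,…,mₙ,m_{n+1}) ∈ Ω_{n+1,k} with k ≥ m₁ ≥ m₂ ≥ ⋯ ≥ mₙ ≥ 1; moreover card(Ω_k) ≥ cₙ·kⁿ for a constant cₙ > 0 depending only on n. -/
open MeasureTheory Set
open scoped ENNReal

noncomputable section

/-!
Boxes whose sides are exact powers of two are their own dyadic hulls. Choosing `k + 1`
increasing exponents `t₁ < ⋯ < t_{k+1}` of lengths of intervals of `B₂`, the product of the
`B₁`-box `[0,2^{s_{1,m₁}}] × ⋯ × [0,2^{s_{n,mₙ}}]` with an interval of `B₂` of length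
`2^{t_{m_{n+1}}}` therefore witnesses completeness at every `m ∈ Ω_k`.

For the count, let `a = ⌊(k - 1)/(n + 1)²⌋` and cut `[1, n a]` into `n` consecutive blocks of
length `a`; picking `m₁` freely in the top block, `m₂` in the next one, …, `mₙ` in the bottom one
gives `aⁿ` decreasing tuples with `m₁ + ⋯ + mₙ ≤ n² a < k`, each completed by
`m_{n+1} = k - ∑ mᵢ`. As `Ω_k ≠ ∅` and `k ≤ 2 (n + 1)² max(a, 1)`, this is `≳ kⁿ`.
-/

lemma Set.Infinite.exists_increasing_chain {α : Type*} [LinearOrder α] {E : Set α}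
    (hE : E.Infinite) (k : ℕ) : ∃ t : ℕ → α, (∀ m < k, t m < t (m + 1)) ∧ ∀ m, t m ∈ E := by
  obtain ⟨T, hTE, hT⟩ := hE.exists_subset_card_eq (k + 1)
  let e := T.orderEmbOfFin hT
  refine ⟨fun m => e ⟨min m k, by omega⟩, fun m hm => e.strictMono ?_,
    fun m => hTE (T.orderEmbOfFin_mem hT _)⟩
  simp only [Fin.mk_lt_mk]
  omega

def originDyadicBox {n : ℕ} (p : Fin n → ℤ) : BoxInterval n :=
  ⟨fun _ => 0, fun j => (2:ℝ) ^ p j, fun j => by positivity⟩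

lemma originDyadicBox_side {n : ℕ} (p : Fin n → ℤ) (j : Fin n) :
    (originDyadicBox p).side j = (2:ℝ) ^ p j := by
  simp [originDyadicBox, BoxInterval.side]

lemma dyadicHull_side_of_eq_zpow {n : ℕ} {R : BoxInterval n} {j : Fin n} {t : ℤ}
    (h : R.side j = (2:ℝ) ^ t) : (dyadicHull R).side j = (2:ℝ) ^ t := by
  have hlog : Real.logb 2 ((2:ℝ) ^ t) = t := by
    rw [← Real.rpow_intCast, Real.logb_rpow two_pos (by norm_num)]
  simp only [dyadicHull, BoxInterval.side] at h ⊢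
  rw [h, hlog, Int.ceil_intCast]
  ring

lemma prodBox_side_castSucc {n : ℕ} (J1 : BoxInterval n) (J2 : BoxInterval 1) (i : Fin n) :
    (prodBox J1 J2).side i.castSucc = J1.side i := by
  simp [prodBox, BoxInterval.side]

lemma prodBox_side_last {n : ℕ} (J1 : BoxInterval n) (J2 : BoxInterval 1) :
    (prodBox J1 J2).side (Fin.last n) = J2.side 0 := by
  simp [prodBox, BoxInterval.side]

lemma omegaComplete_of_forall_exists_side_eq {n k : ℕ} {B : Set (BoxInterval n)}
    {Ω : Set (Fin n → ℕ)} (s : Fin n → ℕ → ℤ) (hs : ∀ j, ∀ m, m < k → s j m < s j (m + 1))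
    (hΩ : ∀ m ∈ Ω, ∀ j, 1 ≤ m j ∧ m j ≤ k)
    (hB : ∀ m ∈ Ω, ∃ R ∈ B, ∀ j, R.side j = (2:ℝ) ^ s j (m j)) :
    OmegaComplete B k Ω := by
  refine ⟨s, hs, fun m hm => ?_⟩
  obtain ⟨R, hRB, hR⟩ := hB m hm
  refine ⟨dyadicHull R, ⟨R, hRB, rfl⟩, fun j => ?_⟩
  obtain ⟨hm1, hmk⟩ := hΩ m hm j
  have hlt := hs j (m j - 1) (by omega)
  rw [Nat.sub_add_cancel hm1] at hlt
  rw [dyadicHull_side_of_eq_zpow (hR j)]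
  exact ⟨zpow_lt_zpow_right₀ one_lt_two hlt, le_rfl⟩

/-- The set `Ω_k` of the theorem. -/
def decreasingOmega (n k : ℕ) : Set (Fin (n + 1) → ℕ) :=
  {m | m ∈ OmegaNK (n + 1) k ∧ (∀ i j : Fin n, i ≤ j → m j.castSucc ≤ m i.castSucc) ∧
    (∀ i : Fin n, 1 ≤ m i.castSucc) ∧ (∀ i : Fin n, m i.castSucc ≤ k)}

lemma le_of_mem_omegaNK {n k : ℕ} {m : Fin n → ℕ} (hm : m ∈ OmegaNK n k) (j : Fin n) :
    m j ≤ k :=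
  hm.2 ▸ Finset.single_le_sum (fun i _ => Nat.zero_le (m i)) (Finset.mem_univ j)

lemma omegaComplete_prodBasis_decreasingOmega {n : ℕ} {B1 : Set (BoxInterval n)}
    {B2 : Set (BoxInterval 1)} {k : ℕ} {s : Fin n → ℕ → ℤ}
    (hs : ∀ j, ∀ m, m < k → s j m < s j (m + 1))
    (hB1 : ∀ m : Fin n → ℕ, (∀ j, m j ≤ k) → (∀ i j : Fin n, i ≤ j → m j ≤ m i) →
      originDyadicBox (fun j => s j (m j)) ∈ B1)
    (hB2 : {t : ℤ | ∃ I ∈ B2, I.side 0 = (2:ℝ) ^ t}.Infinite) :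
    OmegaComplete (prodBasis B1 B2) k (decreasingOmega n k) := by
  obtain ⟨t, ht, htB2⟩ := hB2.exists_increasing_chain k
  refine omegaComplete_of_forall_exists_side_eq (Fin.snoc (α := fun _ => ℕ → ℤ) s t) ?_ ?_ ?_
  · intro j
    induction j using Fin.lastCases with
    | last => simpa only [Fin.snoc_last] using ht
    | cast i => simpa only [Fin.snoc_castSucc] using hs i
  · rintro m ⟨hmΩ, -, -, -⟩ j
    exact ⟨hmΩ.1 j, le_of_mem_omegaNK hmΩ j⟩
  · rintro m ⟨-, hdec, -, hmk⟩
    obtain ⟨I, hI, hIside⟩ := htB2 (m (Fin.last n))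
    refine ⟨prodBox (originDyadicBox fun j => s j (m j.castSucc)) I,
      ⟨_, hB1 _ hmk hdec, I, hI, rfl⟩, fun j => ?_⟩
    induction j using Fin.lastCases with
    | last => rw [prodBox_side_last, hIside, Fin.snoc_last]
    | cast i => rw [prodBox_side_castSucc, originDyadicBox_side, Fin.snoc_castSucc]

lemma decreasingOmega_finite (n k : ℕ) : (decreasingOmega n k).Finite :=
  (Set.finite_Icc (0 : Fin (n + 1) → ℕ) fun _ => k).subset fun _ hm =>
    ⟨fun _ => Nat.zero_le _, le_of_mem_omegaNK hm.1⟩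

lemma decreasingOmega_nonempty {n k : ℕ} (hk : n + 1 ≤ k) : (decreasingOmega n k).Nonempty := by
  refine ⟨Fin.snoc (fun _ => 1) (k - n), ⟨⟨fun j => ?_, ?_⟩, ?_, ?_, ?_⟩⟩
  · induction j using Fin.lastCases with
    | last => rw [Fin.snoc_last]; omega
    | cast i => rw [Fin.snoc_castSucc]
  · simp only [Fin.sum_univ_castSucc, Fin.snoc_last, Fin.snoc_castSucc, Finset.sum_const,
      Finset.card_univ, Fintype.card_fin, smul_eq_mul, mul_one]
    omega
  · simp
  · simp
  · simp only [Fin.snoc_castSucc]; omega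

lemma pow_le_ncard_decreasingOmega {n k a : ℕ} (ha : n ^ 2 * a < k) :
    a ^ n ≤ (decreasingOmega n k).ncard := by
  let g : (Fin n → Fin a) → Fin n → ℕ := fun x i => a * (n - 1 - i) + x i + 1
  let F : (Fin n → Fin a) → Fin (n + 1) → ℕ := fun x => Fin.snoc (g x) (k - ∑ i, g x i)
  have hg_le : ∀ x i, g x i ≤ a * (n - i) := by
    intro x i
    have : a * (n - 1 - i) + a = a * (n - i) := by
      rw [← Nat.mul_succ]; congr 1; omega
    have := (x i).isLt
    simp only [g]
    omega
  have hsum : ∀ x, ∑ i, g x i < k := fun x =>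
    calc ∑ i, g x i ≤ ∑ _i : Fin n, a * n :=
          Finset.sum_le_sum fun i _ => (hg_le x i).trans (Nat.mul_le_mul_left a (by omega))
      _ = n ^ 2 * a := by
          rw [Finset.sum_const, Finset.card_univ, Fintype.card_fin, smul_eq_mul]; ring
      _ < k := ha
  have hF_inj : Function.Injective F := fun x y hxy => funext fun i => Fin.ext <| by
    have := congrFun hxy i.castSucc
    simp only [F, g, Fin.snoc_castSucc] at this
    omega
  have hF_mem : ∀ x, F x ∈ decreasingOmega n k := by
    intro x
    have hgk : ∀ i, g x i < k := fun i =>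
      (Finset.single_le_sum (fun j _ => Nat.zero_le (g x j)) (Finset.mem_univ i)).trans_lt
        (hsum x)
    refine ⟨⟨fun j => ?_, ?_⟩, fun i j hij => ?_, fun i => ?_, fun i => ?_⟩
    · induction j using Fin.lastCases with
      | last => simp only [F, Fin.snoc_last]; have := hsum x; omega
      | cast i => simp only [F, g, Fin.snoc_castSucc]; omega
    · simp only [F, Fin.sum_univ_castSucc, Fin.snoc_last, Fin.snoc_castSucc]
      have := hsum x; omega
    · simp only [F, Fin.snoc_castSucc]
      rcases hij.eq_or_lt with rfl | hlt
      · rfl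
      · have hlt : (i : ℕ) < j := hlt
        have := hg_le x j
        have : a * (n - j) ≤ a * (n - 1 - i) := Nat.mul_le_mul_left a (by omega)
        simp only [g] at *
        omega
    · simp only [F, g, Fin.snoc_castSucc]; omega
    · simpa only [F, Fin.snoc_castSucc] using (hgk i).le
  calc a ^ n = Nat.card (Set.range F) := by
        rw [Nat.card_range_of_injective hF_inj, Nat.card_eq_fintype_card, Fintype.card_fun,
          Fintype.card_fin, Fintype.card_fin]
    _ ≤ (decreasingOmega n k).ncard := by
        rw [Nat.card_coe_set_eq]
        exact Set.ncard_le_ncard (Set.range_subset_iff.2 hF_mem) (decreasingOmega_finite n k)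

lemma exists_const_mul_pow_le_ncard_decreasingOmega (n : ℕ) :
    ∃ c : ℝ, 0 < c ∧ ∀ k : ℕ, n + 1 ≤ k → c * (k : ℝ) ^ n ≤ (decreasingOmega n k).ncard := by
  refine ⟨((2 * (n + 1) ^ 2 : ℝ)⁻¹) ^ n, by positivity, fun k hk => ?_⟩
  have hdiv := Nat.lt_mul_div_succ (k - 1) (show 0 < (n + 1) ^ 2 by positivity)
  set a := (k - 1) / (n + 1) ^ 2
  have hk_le : k ≤ 2 * (n + 1) ^ 2 * max a 1 :=
    calc k ≤ (n + 1) ^ 2 * (a + 1) := by omega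
      _ ≤ (n + 1) ^ 2 * (2 * max a 1) := Nat.mul_le_mul_left _ (by omega)
      _ = 2 * (n + 1) ^ 2 * max a 1 := by ring
  have hcard : max a 1 ^ n ≤ (decreasingOmega n k).ncard := by
    rcases max_choice a 1 with h | h <;> rw [h]
    · refine pow_le_ncard_decreasingOmega ?_
      calc n ^ 2 * a ≤ (n + 1) ^ 2 * a := Nat.mul_le_mul_right a (by gcongr; omega)
        _ ≤ k - 1 := by rw [mul_comm]; exact Nat.div_mul_le_self _ _
        _ < k := by omega
    · rw [one_pow]
      exact (Set.ncard_pos (decreasingOmega_finite n k)).2 (decreasingOmega_nonempty hk)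
  calc ((2 * (n + 1) ^ 2 : ℝ)⁻¹) ^ n * (k : ℝ) ^ n = ((2 * (n + 1) ^ 2 : ℝ)⁻¹ * k) ^ n := by
        rw [mul_pow]
    _ ≤ ((max a 1 : ℕ) : ℝ) ^ n := by
        gcongr
        rw [inv_mul_le_iff₀ (by positivity)]
        exact_mod_cast hk_le
    _ ≤ (decreasingOmega n k).ncard := by exact_mod_cast hcard

/-- Application VIII (completeness part): if `B₁ ⊂ ℝⁿ` contains all boxes
`[0,2^{s_{1,m₁}}] × ⋯ × [0,2^{s_{n,mₙ}}]` for decreasing tuples `k ≥ m₁ ≥ ⋯ ≥ mₙ ≥ 0`, then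
`B₁ × B₂` is `Ω_k`-complete for every `k ≥ n + 1`, where `Ω_k` consists of the tuples of
`Ω_{n+1,k}` with `k ≥ m₁ ≥ ⋯ ≥ mₙ ≥ 1`; moreover `card Ω_k ≥ cₙ kⁿ`. -/
theorem statement18 (n : ℕ) (B1 : Set (BoxInterval n))
    (hprop : ∀ k : ℕ, ∃ s : Fin n → ℕ → ℤ,
      (∀ j, ∀ m, m < k → s j m < s j (m + 1)) ∧
      ∀ m : Fin n → ℕ, (∀ j, m j ≤ k) → (∀ i j : Fin n, i ≤ j → m j ≤ m i) →
        (⟨fun _ => 0, fun j => (2:ℝ) ^ s j (m j),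
          fun j => by positivity⟩ : BoxInterval n) ∈ B1)
    (B2 : Set (BoxInterval 1))
    (hB2inf : {l : ℝ | ∃ I ∈ B2, I.side 0 = l}.Infinite)
    (hB2dyadic : {l : ℝ | ∃ I ∈ B2, I.side 0 = l} ⊆ {x | ∃ s : ℤ, x = (2:ℝ) ^ s}) :
    (∀ k : ℕ, n + 1 ≤ k → OmegaComplete (prodBasis B1 B2) k
      {m : Fin (n + 1) → ℕ | m ∈ OmegaNK (n + 1) k ∧
        (∀ i j : Fin n, i ≤ j → m j.castSucc ≤ m i.castSucc) ∧
        (∀ i : Fin n, 1 ≤ m i.castSucc) ∧ (∀ i : Fin n, m i.castSucc ≤ k)}) ∧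
    ∃ c : ℝ, 0 < c ∧ ∀ k : ℕ, n + 1 ≤ k →
      c * (k : ℝ) ^ n ≤
        (({m : Fin (n + 1) → ℕ | m ∈ OmegaNK (n + 1) k ∧
        (∀ i j : Fin n, i ≤ j → m j.castSucc ≤ m i.castSucc) ∧
        (∀ i : Fin n, 1 ≤ m i.castSucc) ∧ (∀ i : Fin n, m i.castSucc ≤ k)}).ncard : ℝ) := by
  have hexponents : {t : ℤ | ∃ I ∈ B2, I.side 0 = (2:ℝ) ^ t}.Infinite :=
    hB2inf.preimage fun _ hl => (hB2dyadic hl).imp fun _ h => h.symm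
  refine ⟨fun k _ => ?_, exists_const_mul_pow_le_ncard_decreasingOmega n⟩
  obtain ⟨s, hs, hsB1⟩ := hprop k
  exact omegaComplete_prodBasis_decreasingOmega hs hsB1 hexponents
end
end
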